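/- arXiv:2209.07520 — 4 statements merged into one kernel-verified Lean document; each statement's English description precedes it below -/
import Mathlib

section
/- The real number c = 0.349 satisfies 1 - 3c + (1 - exp(-c(1-2c)/(1-c)^2))^2 ≥ 0. -/
theorem stmt_2 :
    1 - 3 * (0.349 : ℝ)
      + (1 - Real.exp (-(0.349 * (1 - 2 * 0.349) / (1 - 0.349)^2)))^2 ≥ 0 := by
  set x : ℝ := 0.349 * (1 - 2 * 0.349) / (1 - 0.349)^2 with hxdef
  have hx0 : x = 105398/423801 := by rw [hxdef]; norm_num
  have h1 : |(-x)| ≤ 1 := by rw [hx0]; rw [abs_le]; constructor <;> norm_num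
  have hb := Real.exp_bound h1 (n := 4) (by norm_num)
  rw [Finset.sum_range_succ, Finset.sum_range_succ, Finset.sum_range_succ,
    Finset.sum_range_succ, Finset.sum_range_zero] at hb
  rw [hx0] at hb ⊢
  rw [abs_le] at hb
  rw [show |(-(105398/423801):ℝ)| = 105398/423801 by rw [abs_neg]; exact abs_of_nonneg (by norm_num)] at hb
  norm_num [Nat.factorial] at hb
  obtain ⟨hb1, hb2⟩ := hb
  have hE : Real.exp (-(105398/423801 : ℝ)) ≤ 0.7801 := by nlinarith
  have hEpos : (0:ℝ) < Real.exp (-(105398/423801 : ℝ)) := Real.exp_pos _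
  nlinarith
end

section
/- Let a(x) = (1 - (3 - e)x)^2 where e is Euler's number. Then a(0) = 1, a is continuous on [0,1], a is (weakly) decreasing on [0,1], and for every fixed y ∈ [0,1] the function x ↦ log(1 - y·x·a(x)) is convex on [0,1]. -/
/-! With `c = 3 - e` and `g x = x (1 - c x)²`, the function is `log (1 - y g x)`, and a positive
`h` is log-convex wherever `h'² ≤ h h''`. For `h = 1 - y g` this inequality is affine in `y` once
divided by `y`, so it suffices to check it at `y = 0`, where it says `g'' ≤ 0`, and at `y = 1`,
where it is the polynomial inequality `g'² ≤ -g'' (1 - g)`. Both hold on `[0, 1]` as soon as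
`1/4 ≤ c ≤ 2/7`, and `19/7 < e < 11/4`. -/

open Real Set

theorem convexOn_log_of_sq_deriv_le_mul {D : Set ℝ} (hD : Convex ℝ D) {h h' h'' : ℝ → ℝ}
    (hcont : ContinuousOn h D) (hpos : ∀ x ∈ D, 0 < h x)
    (hh : ∀ x ∈ interior D, HasDerivAt h (h' x) x)
    (hh' : ∀ x ∈ interior D, HasDerivAt h' (h'' x) x)
    (hle : ∀ x ∈ interior D, h' x ^ 2 ≤ h x * h'' x) :
    ConvexOn ℝ D (fun x => log (h x)) := by
  have hpos' : ∀ x ∈ interior D, h x ≠ 0 := fun x hx => (hpos x (interior_subset hx)).ne'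
  refine convexOn_of_hasDerivWithinAt2_nonneg hD (hcont.log fun x hx => (hpos x hx).ne')
    (f' := fun x => h' x / h x) (f'' := fun x => (h'' x * h x - h' x * h' x) / h x ^ 2)
    (fun x hx => ((hh x hx).log (hpos' x hx)).hasDerivWithinAt)
    (fun x hx => ((hh' x hx).div (hh x hx) (hpos' x hx)).hasDerivWithinAt) fun x hx => ?_
  have := hle x hx
  exact div_nonneg (by nlinarith) (sq_nonneg _)

theorem mul_sq_le_one_sub_mul_mul_mul {p q G y : ℝ} (hp : 0 ≤ p) (hq : q ^ 2 ≤ p * (1 - G))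
    (hy : y ∈ Icc (0 : ℝ) 1) : (y * q) ^ 2 ≤ (1 - y * G) * (y * p) := by
  nlinarith [mul_nonneg (sq_nonneg y) (sub_nonneg.2 hq),
    mul_nonneg (mul_nonneg hy.1 (sub_nonneg.2 hy.2)) hp]

theorem hasDerivAt_mul_one_sub_mul_sq (c x : ℝ) :
    HasDerivAt (fun x => x * (1 - c * x) ^ 2) (1 - 4 * c * x + 3 * c ^ 2 * x ^ 2) x :=
  ((hasDerivAt_id' x).fun_mul (((hasDerivAt_id' x).const_mul c).const_sub 1 |>.fun_pow 2)
    ).congr_deriv (by ring)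

theorem hasDerivAt_one_sub_four_mul_add (c x : ℝ) :
    HasDerivAt (fun x => 1 - 4 * c * x + 3 * c ^ 2 * x ^ 2) (6 * c ^ 2 * x - 4 * c) x :=
  ((((hasDerivAt_id' x).const_mul (4 * c)).const_sub 1).add
    ((hasDerivAt_pow 2 x).const_mul (3 * c ^ 2))).congr_deriv (by ring)

section Cubic

variable {c : ℝ}

theorem antitoneOn_one_sub_mul_sq (hc₀ : 0 ≤ c) (hc₁ : c ≤ 1) :
    AntitoneOn (fun x => (1 - c * x) ^ 2) (Icc 0 1) := fun u _ v ⟨_, hv₁⟩ huv =>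
  pow_le_pow_left₀ (by nlinarith) (by nlinarith) 2

theorem mul_one_sub_mul_sq_lt_one (hc₀ : 0 < c) (hc₁ : c ≤ 1) {x : ℝ} (hx : x ∈ Icc (0 : ℝ) 1) :
    x * (1 - c * x) ^ 2 < 1 := by
  obtain ⟨hx₀, hx₁⟩ := hx
  have hcx : c * x ≤ 1 := by nlinarith
  nlinarith [mul_nonneg hc₀.le hx₀, mul_nonneg hx₀ (mul_nonneg hc₀.le hx₀)]

theorem one_sub_four_mul_add_sq_le (hc₁ : 1 / 4 ≤ c) (hc₂ : c ≤ 2 / 7) {x : ℝ}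
    (hx : x ∈ Icc (0 : ℝ) 1) :
    (1 - 4 * c * x + 3 * c ^ 2 * x ^ 2) ^ 2 ≤
      (4 * c - 6 * c ^ 2 * x) * (1 - x * (1 - c * x) ^ 2) := by
  obtain ⟨hx₀, hx₁⟩ := hx
  have hcx : 3 * c * x ≤ 8 := by nlinarith
  have hc₀ : 0 ≤ c := by linarith
  -- the difference is `(4c - 1) + (4c - 14c²) x + 8c² x (1 - x) + c³x³ (8 - 3cx)`
  have : 0 ≤ 4 * c - 14 * c ^ 2 := by nlinarith
  nlinarith [mul_nonneg this hx₀, mul_nonneg (sq_nonneg c) (mul_nonneg hx₀ (sub_nonneg.2 hx₁)),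
    mul_nonneg (pow_nonneg (mul_nonneg hc₀ hx₀) 3) (sub_nonneg.2 hcx)]

theorem convexOn_log_one_sub_mul_mul_one_sub_mul_sq (hc₁ : 1 / 4 ≤ c) (hc₂ : c ≤ 2 / 7)
    {y : ℝ} (hy : y ∈ Icc (0 : ℝ) 1) :
    ConvexOn ℝ (Icc 0 1) (fun x => log (1 - y * x * (1 - c * x) ^ 2)) := by
  simp only [mul_assoc]
  refine convexOn_log_of_sq_deriv_le_mul (convex_Icc 0 1) (by fun_prop)
    (h' := fun x => -(y * (1 - 4 * c * x + 3 * c ^ 2 * x ^ 2)))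
    (h'' := fun x => -(y * (6 * c ^ 2 * x - 4 * c)))
    (fun x hx => by nlinarith [mul_one_sub_mul_sq_lt_one (by linarith) (by linarith) hx,
      mul_le_of_le_one_left (mul_nonneg hx.1 (sq_nonneg (1 - c * x))) hy.2, hy.1])
    (fun x _ => ((hasDerivAt_mul_one_sub_mul_sq c x).const_mul y).const_sub 1)
    (fun x _ => ((hasDerivAt_one_sub_four_mul_add c x).const_mul y).neg) fun x hx => ?_
  rw [interior_Icc] at hx
  have hx' : x ∈ Icc (0 : ℝ) 1 := Ioo_subset_Icc_self hx
  have hp : 0 ≤ 4 * c - 6 * c ^ 2 * x := by nlinarith [hx.1, hx.2]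
  have := mul_sq_le_one_sub_mul_mul_mul hp (one_sub_four_mul_add_sq_le hc₁ hc₂ hx') hy
  linear_combination this

end Cubic

theorem three_sub_exp_one_mem : 3 - exp 1 ∈ Icc (1 / 4 : ℝ) (2 / 7) :=
  ⟨by linarith [exp_one_lt_d9], by linarith [exp_one_gt_d9]⟩

theorem stmt_5 (a : ℝ → ℝ)
    (ha : ∀ x, a x = (1 - (3 - Real.exp 1) * x)^2) :
    a 0 = 1 ∧ ContinuousOn a (Set.Icc 0 1) ∧ AntitoneOn a (Set.Icc 0 1) ∧
    ∀ y ∈ Set.Icc (0:ℝ) 1,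
      ConvexOn ℝ (Set.Icc (0:ℝ) 1) (fun x => Real.log (1 - y * x * a x)) := by
  obtain rfl : a = fun x => (1 - (3 - exp 1) * x) ^ 2 := funext ha
  obtain ⟨hc₁, hc₂⟩ := three_sub_exp_one_mem
  exact ⟨by norm_num, by fun_prop, antitoneOn_one_sub_mul_sq (by linarith) (by linarith),
    fun y hy => convexOn_log_one_sub_mul_mul_one_sub_mul_sq hc₁ hc₂ hy⟩
end

section
/- Let a(x) = (1 - (3 - e)x)^2. Then for all x ∈ [0,1), a'(x)/a(x) + 4/(1 - x) - 2(1 - exp(x - 1))/(exp(x - 1) - x) ≤ 0. -/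
/-!
Put `t = 1 - x` and `H t = exp t * ((2e - 4) - (2e - 5) t) - ((2e - 4) + t + (3 - e) t²)`.
Over the positive common denominator `(1 - (3 - e) x) (1 - x) (exp (x - 1) - x)` the left-hand
side has numerator `-2 exp (x - 1) H t`, so it suffices that `H ≥ 0` on `[0, 1]`.
Now `H 0 = H 1 = 0`, and `H''' t = exp t * ((11 - 4e) - (2e - 5) t)` changes sign once on
`[0, 1]`, from `+` to `-`. Since `H' 0 = H'' 0 = 0` while `H'' 1 < 0` and `H' 1 < 0`, this single
sign change passes down to `H''` and then to `H'`, so `H` rises and then falls on `[0, 1]`.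
-/

open Real Set

def NonnegThenNonposOn (g : ℝ → ℝ) (a b : ℝ) : Prop :=
  ∃ s ∈ Icc a b, (∀ t ∈ Icc a s, 0 ≤ g t) ∧ ∀ t ∈ Icc s b, g t ≤ 0

section Derivative

variable {f f' : ℝ → ℝ} {a b : ℝ}

lemma monotoneOn_Icc_of_hasDerivAt_nonneg (hf : ∀ t, HasDerivAt f (f' t) t)
    (h : ∀ t ∈ Icc a b, 0 ≤ f' t) : MonotoneOn f (Icc a b) :=
  monotoneOn_of_hasDerivWithinAt_nonneg (convex_Icc a b)
    (fun t _ => (hf t).continuousAt.continuousWithinAt) (fun t _ => (hf t).hasDerivWithinAt)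
    (fun t ht => h t (interior_subset ht))

lemma antitoneOn_Icc_of_hasDerivAt_nonpos (hf : ∀ t, HasDerivAt f (f' t) t)
    (h : ∀ t ∈ Icc a b, f' t ≤ 0) : AntitoneOn f (Icc a b) :=
  antitoneOn_of_hasDerivWithinAt_nonpos (convex_Icc a b)
    (fun t _ => (hf t).continuousAt.continuousWithinAt) (fun t _ => (hf t).hasDerivWithinAt)
    (fun t ht => h t (interior_subset ht))

lemma NonnegThenNonposOn.of_hasDerivAt (hf : ∀ t, HasDerivAt f (f' t) t)
    (hf' : NonnegThenNonposOn f' a b) (ha : 0 ≤ f a) (hb : f b ≤ 0) :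
    NonnegThenNonposOn f a b := by
  obtain ⟨s, hs, hpos, hneg⟩ := hf'
  have hmono := monotoneOn_Icc_of_hasDerivAt_nonneg hf hpos
  have hanti := antitoneOn_Icc_of_hasDerivAt_nonpos hf hneg
  have hfs : 0 ≤ f s := ha.trans (hmono (left_mem_Icc.2 hs.1) (right_mem_Icc.2 hs.1) hs.1)
  obtain ⟨r, hr, hfr⟩ := intermediate_value_Icc' hs.2
    (fun t _ => (hf t).continuousAt.continuousWithinAt) ⟨hb, hfs⟩
  refine ⟨r, ⟨hs.1.trans hr.1, hr.2⟩, fun t ht => ?_, fun t ht => ?_⟩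
  · rcases le_total t s with hts | hst
    · exact ha.trans (hmono (left_mem_Icc.2 hs.1) ⟨ht.1, hts⟩ ht.1)
    · exact hfr ▸ hanti ⟨hst, ht.2.trans hr.2⟩ hr ht.2
  · exact hfr ▸ hanti hr ⟨hr.1.trans ht.1, ht.2⟩ ht.1

lemma NonnegThenNonposOn.nonneg_of_hasDerivAt (hf : ∀ t, HasDerivAt f (f' t) t)
    (hf' : NonnegThenNonposOn f' a b) (ha : 0 ≤ f a) (hb : 0 ≤ f b) :
    ∀ t ∈ Icc a b, 0 ≤ f t := by
  obtain ⟨s, hs, hpos, hneg⟩ := hf'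
  intro t ht
  rcases le_total t s with hts | hst
  · exact ha.trans (monotoneOn_Icc_of_hasDerivAt_nonneg hf hpos
      (left_mem_Icc.2 hs.1) ⟨ht.1, hts⟩ ht.1)
  · exact hb.trans (antitoneOn_Icc_of_hasDerivAt_nonpos hf hneg
      ⟨hst, ht.2⟩ (right_mem_Icc.2 hs.2) ht.2)

end Derivative

noncomputable def expAffineSubQuad (p q u v w t : ℝ) : ℝ :=
  exp t * (p - q * t) - (u + v * t + w * t ^ 2)

lemma hasDerivAt_expAffineSubQuad {p q u v w p' u' v' : ℝ} (hp : p' = p - q) (hu : u' = v)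
    (hv : v' = 2 * w) (t : ℝ) :
    HasDerivAt (expAffineSubQuad p q u v w) (expAffineSubQuad p' q u' v' 0 t) t := by
  rw [hp, hu, hv]
  have hlin : HasDerivAt (fun t => p - q * t) (-q) t :=
    (((hasDerivAt_id' t).const_mul q).const_sub p).congr_deriv (by ring)
  have hquad : HasDerivAt (fun t => u + v * t + w * t ^ 2) (v + w * (2 * t)) t :=
    ((((hasDerivAt_id' t).const_mul v).const_add u).add
      ((hasDerivAt_pow 2 t).const_mul w)).congr_deriv (by ring)
  exact (((hasDerivAt_exp t).mul hlin).sub hquad).congr_deriv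
    (by simp only [expAffineSubQuad]; ring)

lemma nonnegThenNonposOn_expAffineSubQuad {p q a b : ℝ} (hq : 0 < q) (hpq : p / q ∈ Icc a b) :
    NonnegThenNonposOn (expAffineSubQuad p q 0 0 0) a b := by
  refine ⟨p / q, hpq, fun t ht => ?_, fun t ht => ?_⟩
  · have : q * t ≤ p := by rw [mul_comm]; exact (le_div_iff₀ hq).1 ht.2
    simp only [expAffineSubQuad]
    nlinarith [exp_pos t]
  · have : p ≤ q * t := by rw [mul_comm]; exact (div_le_iff₀ hq).1 ht.1
    simp only [expAffineSubQuad]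
    nlinarith [exp_pos t]

lemma expAffineSubQuad_nonneg {t : ℝ} (ht : t ∈ Icc (0 : ℝ) 1) :
    0 ≤ expAffineSubQuad (2 * exp 1 - 4) (2 * exp 1 - 5) (2 * exp 1 - 4) 1 (3 - exp 1) t := by
  have he₁ : (2.7182818283 : ℝ) < exp 1 := exp_one_gt_d9
  have he₂ : exp 1 < 2.7182818286 := exp_one_lt_d9
  have hq : (0 : ℝ) < 2 * exp 1 - 5 := by linarith
  have h₃ : NonnegThenNonposOn
      (expAffineSubQuad (11 - 4 * exp 1) (2 * exp 1 - 5) 0 0 0) 0 1 :=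
    nonnegThenNonposOn_expAffineSubQuad hq
      ⟨div_nonneg (by linarith) hq.le, (div_le_one hq).2 (by linarith)⟩
  have h₂ : NonnegThenNonposOn
      (expAffineSubQuad (6 - 2 * exp 1) (2 * exp 1 - 5) (6 - 2 * exp 1) 0 0) 0 1 :=
    h₃.of_hasDerivAt (hasDerivAt_expAffineSubQuad (by ring) rfl (by ring))
      (by simp [expAffineSubQuad]) (by simp only [expAffineSubQuad]; nlinarith)
  have h₁ : NonnegThenNonposOn
      (expAffineSubQuad 1 (2 * exp 1 - 5) 1 (6 - 2 * exp 1) 0) 0 1 :=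
    h₂.of_hasDerivAt (hasDerivAt_expAffineSubQuad (by ring) rfl (by ring))
      (by simp [expAffineSubQuad]) (by simp only [expAffineSubQuad]; nlinarith)
  exact h₁.nonneg_of_hasDerivAt (hasDerivAt_expAffineSubQuad (by ring) rfl (by ring))
    (by simp [expAffineSubQuad]) (le_of_eq (by simp only [expAffineSubQuad]; ring)) t ht

theorem stmt_6 (a : ℝ → ℝ)
    (ha : ∀ x, a x = (1 - (3 - Real.exp 1) * x)^2) :
    ∀ x ∈ Set.Ico (0:ℝ) 1,
      deriv a x / a x + 4 / (1 - x)
        - 2 * (1 - Real.exp (x - 1)) / (Real.exp (x - 1) - x) ≤ 0 := by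
  rintro x ⟨hx₀, hx₁⟩
  have he₁ : (2.7182818283 : ℝ) < exp 1 := exp_one_gt_d9
  have he₂ : exp 1 < 2.7182818286 := exp_one_lt_d9
  have hax : 0 < 1 - (3 - exp 1) * x := by nlinarith
  have hx : 0 < 1 - x := by linarith
  have hxE : 0 < exp (x - 1) - x := by linarith [add_one_lt_exp (sub_ne_zero.2 hx₁.ne)]
  have hda : deriv a x = -2 * (3 - exp 1) * (1 - (3 - exp 1) * x) := by
    rw [funext ha]
    exact ((((hasDerivAt_id' x).const_mul (3 - exp 1)).const_sub 1).pow 2).deriv.trans (by ring)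
  have hH := expAffineSubQuad_nonneg (t := 1 - x) ⟨by linarith, by linarith⟩
  have hexp : exp (1 - x) = (exp (x - 1))⁻¹ := by rw [← exp_neg, neg_sub]
  have hcommon_denom : deriv a x / a x + 4 / (1 - x) - 2 * (1 - exp (x - 1)) / (exp (x - 1) - x)
      = -2 * exp (x - 1) * expAffineSubQuad (2 * exp 1 - 4) (2 * exp 1 - 5) (2 * exp 1 - 4) 1
          (3 - exp 1) (1 - x) / ((1 - (3 - exp 1) * x) * (1 - x) * (exp (x - 1) - x)) := by
    rw [hda, ha, expAffineSubQuad, hexp]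
    field_simp [hax.ne', hx.ne', hxE.ne']
    ring
  rw [hcommon_denom]
  refine div_nonpos_of_nonpos_of_nonneg ?_ ?_
  · nlinarith [exp_pos (x - 1)]
  · positivity
end

section
/- Fix y ∈ (0,1]. For x ∈ (0,1] and z ∈ (0,2], define g(z) = 4/z - 2(1 - exp(-z))/(z + exp(-z) - 1). Then g is decreasing on (0,2]. -/
/-!
With `u = exp (-z)`, the sign of `g'(z)` is that of `-(2 (z + u - 1)^2 + z^2 (z u + u - 1))`, and
`e^{2z}` times this bracket is `F(z) = (z^2 - 4z + 2) e^{2z} + (z^3 + z^2 + 4z - 4) e^z + 2`.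
Now `F(0) = 0` and `F'(z) = 2 z e^z G(z)` with `G(z) = (z - 3) e^z + z^2/2 + 2z + 3`; in turn
`G(0) = 0`, `G'(z) = H(z) = (z - 2) e^z + z + 2`, `H(0) = 0` and `H'(z) = (z - 1) e^z + 1 > 0`
because `e^{-z} > 1 - z`. Hence `H`, `G`, `F` are positive and `g` decreases on all of `(0, ∞)`.
-/

open Real Set

lemma pos_of_hasDerivAt_pos {f f' : ℝ → ℝ} (hf : ∀ x, HasDerivAt f (f' x) x) (h₀ : f 0 = 0)
    (hf' : ∀ x, 0 < x → 0 < f' x) {x : ℝ} (hx : 0 < x) : 0 < f x := by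
  have hmono : StrictMonoOn f (Ici 0) :=
    strictMonoOn_of_hasDerivWithinAt_pos (convex_Ici 0)
      (fun y _ => (hf y).continuousAt.continuousWithinAt) (fun y _ => (hf y).hasDerivWithinAt)
      (fun y hy => hf' y (by simpa using hy))
  simpa [h₀] using hmono self_mem_Ici hx.le hx

lemma sub_two_mul_exp_add_pos {x : ℝ} (hx : 0 < x) : 0 < (x - 2) * exp x + x + 2 := by
  refine pos_of_hasDerivAt_pos (f := fun x => (x - 2) * exp x + x + 2)
    (f' := fun x => (x - 1) * exp x + 1) (fun x => ?_) (by simp) (fun x hx => ?_) hx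
  · refine ((((hasDerivAt_id' x).sub_const 2).mul (hasDerivAt_exp x)).add (hasDerivAt_id' x)
      |>.add_const 2).congr_deriv ?_
    ring
  · have h := mul_lt_mul_of_pos_right (one_sub_lt_exp_neg hx.ne') (exp_pos x)
    rw [← exp_add, neg_add_cancel, exp_zero] at h
    linarith

lemma sub_three_mul_exp_add_pos {x : ℝ} (hx : 0 < x) :
    0 < (x - 3) * exp x + x ^ 2 / 2 + 2 * x + 3 := by
  refine pos_of_hasDerivAt_pos (f := fun x => (x - 3) * exp x + x ^ 2 / 2 + 2 * x + 3)
    (f' := fun x => (x - 2) * exp x + x + 2) (fun x => ?_) (by simp)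
    (fun x hx => sub_two_mul_exp_add_pos hx) hx
  refine ((((hasDerivAt_id' x).sub_const 3).mul (hasDerivAt_exp x)).add
    ((hasDerivAt_pow 2 x).div_const 2) |>.add ((hasDerivAt_id' x).const_mul 2)
    |>.add_const 3).congr_deriv ?_
  push_cast
  ring

lemma quadratic_in_exp_pos {x : ℝ} (hx : 0 < x) :
    0 < (x ^ 2 - 4 * x + 2) * exp x ^ 2 + (x ^ 3 + x ^ 2 + 4 * x - 4) * exp x + 2 := by
  refine pos_of_hasDerivAt_pos
    (f := fun x => (x ^ 2 - 4 * x + 2) * exp x ^ 2 + (x ^ 3 + x ^ 2 + 4 * x - 4) * exp x + 2)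
    (f' := fun x => 2 * x * exp x * ((x - 3) * exp x + x ^ 2 / 2 + 2 * x + 3)) (fun x => ?_)
    (by norm_num) (fun x hx => by have := sub_three_mul_exp_add_pos hx; positivity) hx
  have he := hasDerivAt_exp x
  refine ((((hasDerivAt_pow 2 x).sub ((hasDerivAt_id' x).const_mul 4)).add_const 2).mul
    (he.pow 2)).add ((((hasDerivAt_pow 3 x).add (hasDerivAt_pow 2 x)).add
      ((hasDerivAt_id' x).const_mul 4)).sub_const 4 |>.mul he) |>.add_const 2 |>.congr_deriv ?_
  simp only [Pi.add_apply, Pi.sub_apply, Pi.pow_apply]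
  push_cast
  ring

lemma quadratic_in_exp_neg_pos {z : ℝ} (hz : 0 < z) :
    0 < 2 * (z + exp (-z) - 1) ^ 2 + z ^ 2 * (z * exp (-z) + exp (-z) - 1) := by
  have hF := quadratic_in_exp_pos hz
  have hu : exp z * exp (-z) = 1 := by rw [← exp_add, add_neg_cancel, exp_zero]
  have h : 2 * (z + exp (-z) - 1) ^ 2 + z ^ 2 * (z * exp (-z) + exp (-z) - 1) =
      ((z ^ 2 - 4 * z + 2) * exp z ^ 2 + (z ^ 3 + z ^ 2 + 4 * z - 4) * exp z + 2)
        * exp (-z) ^ 2 := by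
    linear_combination (-(z ^ 2 - 4 * z + 2) * (exp z * exp (-z) + 1)
      - (z ^ 3 + z ^ 2 + 4 * z - 4) * exp (-z)) * hu
  rw [h]
  positivity

lemma add_exp_neg_sub_one_pos {z : ℝ} (hz : z ≠ 0) : 0 < z + exp (-z) - 1 := by
  linarith [one_sub_lt_exp_neg hz]

lemma hasDerivAt_two_mul_one_sub_exp_neg_div {z : ℝ} (hz : z ≠ 0) :
    HasDerivAt (fun z => 2 * (1 - exp (-z)) / (z + exp (-z) - 1))
      (2 * (z * exp (-z) + exp (-z) - 1) / (z + exp (-z) - 1) ^ 2) z := by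
  have he : HasDerivAt (fun z => exp (-z)) (-exp (-z)) z := by
    simpa using (hasDerivAt_neg z).exp
  refine ((((hasDerivAt_const z 1).sub he).const_mul 2).div
    (((hasDerivAt_id' z).add he).sub_const 1) (add_exp_neg_sub_one_pos hz).ne').congr_deriv ?_
  simp only [Pi.add_apply, Pi.sub_apply]
  ring

theorem stmt_17 (g : ℝ → ℝ)
    (hg : ∀ z, g z = 4 / z - 2 * (1 - Real.exp (-z)) / (z + Real.exp (-z) - 1)) :
    StrictAntiOn g (Set.Ioc 0 2) := by
  obtain rfl : g = fun z => 4 / z - 2 * (1 - exp (-z)) / (z + exp (-z) - 1) := funext hg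
  have hderiv : ∀ z ∈ Ioi (0 : ℝ), HasDerivAt _
      (-(2 * (2 * (z + exp (-z) - 1) ^ 2 + z ^ 2 * (z * exp (-z) + exp (-z) - 1)))
        / (z ^ 2 * (z + exp (-z) - 1) ^ 2)) z := fun z hz =>
    ((hasDerivAt_const z 4).div (hasDerivAt_id' z) (ne_of_gt hz)).sub
      (hasDerivAt_two_mul_one_sub_exp_neg_div (ne_of_gt hz)) |>.congr_deriv (by
        have hz₀ : z ≠ 0 := ne_of_gt hz
        have hD := (add_exp_neg_sub_one_pos hz₀).ne'
        field_simp
        ring)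
  refine (strictAntiOn_of_hasDerivWithinAt_neg (convex_Ioi 0)
    (fun z hz => (hderiv z hz).continuousAt.continuousWithinAt)
    (fun z hz => (hderiv z (by simpa using hz)).hasDerivWithinAt) fun z hz => ?_).mono
    Ioc_subset_Ioi_self
  rw [interior_Ioi, mem_Ioi] at hz
  exact div_neg_of_neg_of_pos (by linarith [quadratic_in_exp_neg_pos hz])
    (mul_pos (pow_pos hz 2) (pow_pos (add_exp_neg_sub_one_pos hz.ne') 2))
end
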